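/- arXiv:1309.4351 — 2 statements merged into one kernel-verified Lean document; each statement's English description precedes it below -/
import Mathlib

section
/- For every positive integer n, the double sum over all integers i, j with -n ≤ i, j ≤ n of C(2n, n+i) · C(2n, n+j) · |i² - j²| equals 2n² · C(2n, n)². -/
/-!
Writing `|i² - j²| = ∑_{t<n} (2t+1) [exactly one of |i|, |j| exceeds t]` turns the double sum into
`∑_{t<n} (2t+1) · 2 T_t (4ⁿ - T_t)`, where `T_t = ∑_{|i|>t} C(2n, n+i)` is a two-sided tail of
row `2n`. By Pascal's rule `T_t = 2 (P_t + P_{t+1})` with `P_t = ∑_{u≥t} C(2n-1, n+u)`, and the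
recurrence `(t+1) C(2n, n+t+1) = n (C(2n-1, n+t) - C(2n-1, n+t+1))` makes the resulting sum
telescope.
-/

/-- Binomial coefficient with integer lower index, zero when out of range. -/
def C (m : ℕ) (k : ℤ) : ℕ := if k < 0 then 0 else m.choose k.toNat

open Finset

namespace BrentOsburn

theorem sum_range_odd_mul_ite_lt {R : Type*} [CommRing R] {u n : ℕ} (hu : u ≤ n) :
    ∑ t ∈ range n, (2 * t + 1 : R) * (if t < u then 1 else 0) = (u : R) ^ 2 := by
  simp only [mul_ite, mul_one, mul_zero, ← sum_filter]
  rw [show (range n).filter (· < u) = range u by ext; simp; omega]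
  induction u with
  | zero => simp
  | succ u ih => rw [sum_range_succ, ih (by omega)]; push_cast; ring

theorem abs_sq_sub_sq_eq_sum {R : Type*} [CommRing R] [LinearOrder R] [IsStrictOrderedRing R]
    {u v n : ℕ} (hu : u ≤ n) (hv : v ≤ n) :
    |(u : R) ^ 2 - (v : R) ^ 2| = ∑ t ∈ range n, (2 * t + 1 : R) *
      ((if t < u then 1 else 0) + (if t < v then 1 else 0)
        - 2 * (if t < u then 1 else 0) * (if t < v then 1 else 0)) := by
  wlog hvu : v ≤ u generalizing u v
  · rw [abs_sub_comm, this hv hu (by omega)]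
    exact sum_congr rfl fun t _ => by ring
  have hind : ∀ t, (if t < u then (1 : R) else 0) * (if t < v then 1 else 0)
      = if t < v then 1 else 0 := fun t => by split_ifs <;> first | (exfalso; omega) | simp
  simp only [mul_assoc, hind]
  rw [abs_of_nonneg (sub_nonneg.2 (by exact_mod_cast Nat.pow_le_pow_left hvu 2)),
    ← sum_range_odd_mul_ite_lt hu, ← sum_range_odd_mul_ite_lt hv, ← sum_sub_distrib]
  exact sum_congr rfl fun t _ => by ring

theorem two_mul_add_one_sub_mul_choose (N k : ℕ) :
    (2 * (k + 1) - (N + 1) : ℤ) * (N + 1).choose (k + 1)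
      = (N + 1) * ((N.choose k : ℤ) - N.choose (k + 1)) := by
  have h₁ : ((N + 1) * N.choose k : ℤ) = (N + 1).choose (k + 1) * (k + 1) := by
    exact_mod_cast Nat.add_one_mul_choose_eq N k
  have h₂ : ((N + 1).choose (k + 1) : ℤ) = N.choose k + N.choose (k + 1) := by
    exact_mod_cast Nat.choose_succ_succ' N k
  linear_combination -2 * h₁ - (N + 1 : ℤ) * h₂

theorem sum_Icc_neg_natAbs {M : Type*} [AddCommMonoid M] (g : ℕ → M) (n : ℕ) :
    ∑ i ∈ Icc (-(n : ℤ)) n, g i.natAbs = g 0 + 2 • ∑ u ∈ range n, g (u + 1) := by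
  induction n with
  | zero => simp
  | succ n ih =>
    rw [Nat.cast_add_one, neg_add', ← insert_Icc_left_eq_Icc_sub_one (by omega),
      ← insert_Icc_right_eq_Icc_add_one (by omega), sum_insert (by simp; omega),
      sum_insert (by simp), ih, sum_range_succ, smul_add, show (-(n : ℤ) - 1).natAbs = n + 1 by omega,
      show ((n : ℤ) + 1).natAbs = n + 1 by omega, two_nsmul (g (n + 1))]
    abel

theorem sum_sum_mul_add_sub_two_mul {ι R : Type*} [CommRing R] (s : Finset ι) (a χ : ι → R) :
    ∑ i ∈ s, ∑ j ∈ s, a i * a j * (χ i + χ j - 2 * χ i * χ j)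
      = 2 * (∑ i ∈ s, a i - ∑ i ∈ s, a i * χ i) * ∑ i ∈ s, a i * χ i := by
  calc _ = ∑ i ∈ s, ∑ j ∈ s, (a i * χ i * (a j - a j * χ j) + (a i - a i * χ i) * (a j * χ j)) :=
        sum_congr rfl fun i _ => sum_congr rfl fun j _ => by ring
    _ = (∑ i ∈ s, a i * χ i) * ∑ i ∈ s, (a i - a i * χ i)
          + (∑ i ∈ s, (a i - a i * χ i)) * ∑ i ∈ s, a i * χ i := by
        simp only [sum_add_distrib, sum_mul_sum]
    _ = _ := by rw [sum_sub_distrib]; ring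

theorem sum_sum_mul_abs_sq_sub_sq {ι R : Type*} [CommRing R] [LinearOrder R]
    [IsStrictOrderedRing R] (s : Finset ι) (a : ι → R) (ℓ : ι → ℕ) {n : ℕ}
    (hℓ : ∀ i ∈ s, ℓ i ≤ n) :
    ∑ i ∈ s, ∑ j ∈ s, a i * a j * |(ℓ i : R) ^ 2 - (ℓ j : R) ^ 2|
      = ∑ t ∈ range n, (2 * t + 1 : R) *
          (2 * (∑ i ∈ s, a i - ∑ i ∈ s with t < ℓ i, a i) * ∑ i ∈ s with t < ℓ i, a i) := by
  have hsplit : ∀ i ∈ s, ∀ j ∈ s, a i * a j * |(ℓ i : R) ^ 2 - (ℓ j : R) ^ 2|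
      = ∑ t ∈ range n, (2 * t + 1 : R) * (a i * a j * ((if t < ℓ i then 1 else 0)
        + (if t < ℓ j then 1 else 0)
        - 2 * (if t < ℓ i then 1 else 0) * (if t < ℓ j then 1 else 0))) := by
    intro i hi j hj
    rw [abs_sq_sub_sq_eq_sum (hℓ i hi) (hℓ j hj), mul_sum]
    exact sum_congr rfl fun t _ => by ring
  rw [sum_congr rfl fun i hi => sum_congr rfl fun j hj => hsplit i hi j hj,
    sum_congr rfl fun i _ => sum_comm, sum_comm]
  refine sum_congr rfl fun t _ => ?_
  simp_rw [← mul_sum]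
  rw [sum_sum_mul_add_sub_two_mul]
  simp only [sum_filter, mul_ite, mul_one, mul_zero]

theorem sum_odd_mul_tail_mul_compl {R : Type*} [CommRing R] (p P : ℕ → R) (n : ℕ)
    (hP : ∀ t, P t = p t + P (t + 1)) (hPn : P n = 0) (hpn : p n = 0)
    (hrec : ∀ t : ℕ, ((t : R) + 1) * (p t + p (t + 1)) = n * (p t - p (t + 1))) :
    ∑ t ∈ range n, (2 * t + 1 : R) * (P t + P (t + 1)) * (2 * P 0 - (P t + P (t + 1)))
      = n ^ 2 * p 0 ^ 2 := by
  obtain ⟨x, hx⟩ : ∃ x : ℕ → R, ∀ t, x t = t * (P t + P (t + 1)) - n * p t := ⟨_, fun _ => rfl⟩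
  have hx_succ (t : ℕ) : x (t + 1) = x t + (P t + P (t + 1)) := by
    rw [hx, hx]; push_cast
    linear_combination (-(t : R) - 1) * (hP t + hP (t + 1)) - hrec t
  -- `t * x t` and `x t ^ 2` are antiderivatives of `(2t+1) E_t - n p_t` and
  -- `(2t+1) E_t² - 2n p_t E_t`, where `E_t = P t + P (t + 1)`.
  obtain ⟨F, hF⟩ : ∃ F : ℕ → R, ∀ t,
      F t = 2 * P 0 * t * x t - x t ^ 2 - 2 * n * P 0 * P t + 2 * n * P t ^ 2 :=
    ⟨_, fun _ => rfl⟩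
  have hstep (t : ℕ) : (2 * t + 1 : R) * (P t + P (t + 1)) * (2 * P 0 - (P t + P (t + 1)))
      = F (t + 1) - F t := by
    rw [hF, hF, hx_succ, hx t]; push_cast
    linear_combination (-2 * n * (P 0 - P t - P (t + 1))) * hP t
  rw [sum_congr rfl fun t _ => hstep t, sum_range_sub, hF, hF, hx, hx]
  have hPn' : P (n + 1) = 0 := by linear_combination hPn - hP n - hpn
  simp only [hPn, hPn', hpn, hP 0]
  ring

theorem C_two_mul_add (n : ℕ) (i : ℤ) : C (2 * n) (n + i) = (2 * n).choose (n + i.natAbs) := by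
  unfold C
  split_ifs
  · rw [Nat.choose_eq_zero_of_lt (by omega)]
  · rcases le_or_gt 0 i with hi | hi
    · congr 1; omega
    · exact Nat.choose_symm_of_eq_add (by omega)

def halfRow (n t : ℕ) : ℤ := (2 * n - 1).choose (n + t)

def halfRowTail (n t : ℕ) : ℤ := ∑ u ∈ Ico t n, halfRow n u

section
variable {n : ℕ}

theorem halfRow_of_le (hn : 0 < n) {t : ℕ} (ht : n ≤ t) : halfRow n t = 0 := by
  simp [halfRow, Nat.choose_eq_zero_of_lt (show 2 * n - 1 < n + t by omega)]

theorem halfRowTail_eq_add (hn : 0 < n) (t : ℕ) :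
    halfRowTail n t = halfRow n t + halfRowTail n (t + 1) := by
  rcases lt_or_ge t n with ht | ht
  · exact sum_eq_sum_Ico_succ_bot ht _
  · simp [halfRowTail, halfRow_of_le hn ht, Ico_eq_empty_of_le, ht, ht.trans (Nat.le_succ t)]

theorem choose_two_mul_add_succ (hn : 0 < n) (t : ℕ) :
    ((2 * n).choose (n + (t + 1)) : ℤ) = halfRow n t + halfRow n (t + 1) := by
  obtain ⟨m, rfl⟩ : ∃ m, n = m + 1 := ⟨n - 1, by omega⟩
  rw [show 2 * (m + 1) = (2 * m + 1) + 1 by ring, show m + 1 + (t + 1) = (m + 1 + t) + 1 by ring,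
    Nat.choose_succ_succ']
  simp [halfRow, show 2 * (m + 1) - 1 = 2 * m + 1 by omega, add_assoc]

theorem choose_two_mul_self (hn : 0 < n) : ((2 * n).choose n : ℤ) = 2 * halfRow n 0 := by
  obtain ⟨m, rfl⟩ : ∃ m, n = m + 1 := ⟨n - 1, by omega⟩
  rw [show 2 * (m + 1) = (2 * m + 1) + 1 by ring, Nat.choose_succ_succ', ← Nat.choose_symm_half]
  simp [halfRow, show 2 * (m + 1) - 1 = 2 * m + 1 by omega]
  ring

theorem halfRow_recurrence (hn : 0 < n) (t : ℕ) :
    ((t : ℤ) + 1) * (halfRow n t + halfRow n (t + 1)) = n * (halfRow n t - halfRow n (t + 1)) := by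
  have h := two_mul_add_one_sub_mul_choose (2 * n - 1) (n + t)
  rw [show 2 * n - 1 + 1 = 2 * n by omega, add_assoc, choose_two_mul_add_succ hn] at h
  push_cast [show ((2 * n - 1 : ℕ) : ℤ) = 2 * n - 1 by omega] at h
  simp only [halfRow, add_assoc] at h ⊢
  refine mul_left_cancel₀ (two_ne_zero' ℤ) ?_
  linear_combination h

theorem sum_range_ite_choose_two_mul (hn : 0 < n) (t : ℕ) :
    ∑ u ∈ range n, (if t < u + 1 then ((2 * n).choose (n + (u + 1)) : ℤ) else 0)
      = halfRowTail n t + halfRowTail n (t + 1) := by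
  rw [← sum_filter, show (range n).filter (t < · + 1) = Ico t n by ext; simp; omega]
  simp only [choose_two_mul_add_succ hn, sum_add_distrib]
  congr 1
  rcases lt_or_ge t n with ht | ht
  · rw [sum_Ico_add', sum_Ico_succ_top (by omega), halfRow_of_le hn le_rfl, add_zero]; rfl
  · simp [halfRowTail, Ico_eq_empty_of_le, ht, ht.trans (Nat.le_succ t)]

theorem sum_Icc_C_two_mul (hn : 0 < n) :
    ∑ i ∈ Icc (-(n : ℤ)) n, (C (2 * n) (n + i) : ℤ) = 4 * halfRowTail n 0 := by
  simp only [C_two_mul_add]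
  refine (sum_Icc_neg_natAbs (fun u => ((2 * n).choose (n + u) : ℤ)) n).trans ?_
  have h := sum_range_ite_choose_two_mul hn 0
  simp only [Nat.zero_lt_succ, if_true] at h
  rw [h, add_zero, choose_two_mul_self hn, halfRowTail_eq_add hn 0]
  ring

theorem sum_Icc_C_two_mul_filter (hn : 0 < n) (t : ℕ) :
    ∑ i ∈ Icc (-(n : ℤ)) n with t < i.natAbs, (C (2 * n) (n + i) : ℤ)
      = 2 * (halfRowTail n t + halfRowTail n (t + 1)) := by
  simp only [sum_filter, C_two_mul_add]
  refine (sum_Icc_neg_natAbs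
    (fun u => if t < u then ((2 * n).choose (n + u) : ℤ) else 0) n).trans ?_
  rw [sum_range_ite_choose_two_mul hn, if_neg (Nat.not_lt_zero t), zero_add, two_nsmul,
    two_mul]

end

end BrentOsburn

open BrentOsburn

theorem stmt0 (n : ℕ) (hn : 0 < n) :
    ∑ i ∈ Finset.Icc (-(n : ℤ)) n, ∑ j ∈ Finset.Icc (-(n : ℤ)) n,
      (C (2 * n) (n + i) : ℤ) * C (2 * n) (n + j) * |i ^ 2 - j ^ 2|
    = 2 * n ^ 2 * ((2 * n).choose n) ^ 2 := by
  have hlayers := sum_sum_mul_abs_sq_sub_sq (Icc (-(n : ℤ)) n) (fun i => (C (2 * n) (n + i) : ℤ))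
    Int.natAbs (n := n) fun i hi => by rw [mem_Icc] at hi; omega
  simp only [Int.natAbs_pow_two] at hlayers
  rw [hlayers, sum_Icc_C_two_mul hn]
  simp only [sum_Icc_C_two_mul_filter hn]
  rw [choose_two_mul_self hn, show 2 * (n : ℤ) ^ 2 * (2 * halfRow n 0) ^ 2
      = 8 * (n ^ 2 * halfRow n 0 ^ 2) by ring, ← sum_odd_mul_tail_mul_compl _ _ n
    (halfRowTail_eq_add hn) (by simp [halfRowTail]) (halfRow_of_le hn le_rfl)
    (halfRow_recurrence hn), mul_sum]
  exact sum_congr rfl fun t _ => by ring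
end

section
/- For every positive integer n, Σ_{0 ≤ j ≤ i ≤ n} C(2n, n+i)·C(2n, n+j)·(i² − j²) = (2n)(2n-1)·[ Σ_{0 ≤ j ≤ i ≤ n} C(2n, n+i)·C(2n-2, n-1+j) − Σ_{0 ≤ j ≤ i ≤ n} C(2n-2, n-1+i)·C(2n, n+j) ]. -/
lemma Cnat (m : ℕ) (k : ℕ) : C m (k : ℤ) = m.choose k := by
  simp [C]

lemma keyNat (n i : ℕ) (hn : 0 < n) (hi : i ≤ n) :
    (n + i) * ((n - i) * (2 * n).choose (n + i))
      = 2 * n * ((2 * n - 1) * (2 * n - 2).choose (n - 1 + i)) := by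
  have h1 := Nat.add_one_mul_choose_eq (2 * n - 1) (n - 1 + i)
  rw [show 2 * n - 1 + 1 = 2 * n by omega, show n - 1 + i + 1 = n + i by omega] at h1
  have h2 := Nat.choose_mul_succ_eq (2 * n - 2) (n - 1 + i)
  rw [show 2 * n - 2 + 1 = 2 * n - 1 by omega, show 2 * n - 1 - (n - 1 + i) = n - i by omega] at h2
  calc (n + i) * ((n - i) * (2 * n).choose (n + i))
      = (n - i) * ((2 * n).choose (n + i) * (n + i)) := by ring
    _ = (n - i) * (2 * n * (2 * n - 1).choose (n - 1 + i)) := by rw [← h1]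
    _ = 2 * n * ((2 * n - 1).choose (n - 1 + i) * (n - i)) := by ring
    _ = 2 * n * ((2 * n - 2).choose (n - 1 + i) * (2 * n - 1)) := by rw [← h2]
    _ = 2 * n * ((2 * n - 1) * (2 * n - 2).choose (n - 1 + i)) := by ring

lemma keyInt (n i : ℕ) (hn : 0 < n) (hi : i ≤ n) :
    ((n : ℤ) ^ 2 - (i : ℤ) ^ 2) * (2 * n).choose (n + i)
      = (2 * n) * (2 * n - 1) * (2 * n - 2).choose (n - 1 + i) := by
  have h := keyNat n i hn hi
  have : ((n : ℤ) + i) * (((n : ℤ) - i) * (2 * n).choose (n + i))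
      = 2 * n * ((2 * n - 1) * ((2 * n - 2).choose (n - 1 + i) : ℤ)) := by
    have e1 : ((n : ℤ) - i) = ((n - i : ℕ) : ℤ) := by omega
    have e2 : (2 * (n : ℤ) - 1) = ((2 * n - 1 : ℕ) : ℤ) := by omega
    rw [e1, e2]; exact_mod_cast h
  linear_combination this

theorem stmt12 (n : ℕ) (hn : 0 < n) :
    ∑ i ∈ Finset.range (n + 1), ∑ j ∈ Finset.range (i + 1),
        ((2 * n).choose (n + i) : ℤ) * (2 * n).choose (n + j) * ((i : ℤ) ^ 2 - (j : ℤ) ^ 2)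
    = (2 * n) * (2 * n - 1) *
        ((∑ i ∈ Finset.range (n + 1), ∑ j ∈ Finset.range (i + 1),
            ((2 * n).choose (n + i) : ℤ) * C (2 * n - 2) ((n : ℤ) - 1 + j))
          - ∑ i ∈ Finset.range (n + 1), ∑ j ∈ Finset.range (i + 1),
            (C (2 * n - 2) ((n : ℤ) - 1 + i) : ℤ) * (2 * n).choose (n + j)) := by
  have hC : ∀ k : ℕ, C (2 * n - 2) ((n : ℤ) - 1 + k) = (2 * n - 2).choose (n - 1 + k) := by
    intro k
    rw [show (n : ℤ) - 1 + k = ((n - 1 + k : ℕ) : ℤ) by omega, Cnat]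
  simp only [hC]
  rw [mul_sub, Finset.mul_sum, Finset.mul_sum, ← Finset.sum_sub_distrib]
  refine Finset.sum_congr rfl fun i hi => ?_
  rw [Finset.mul_sum, Finset.mul_sum, ← Finset.sum_sub_distrib]
  refine Finset.sum_congr rfl fun j hj => ?_
  simp only [Finset.mem_range] at hi hj
  have hi' : i ≤ n := by omega
  have hj' : j ≤ n := by omega
  have ki := keyInt n i hn hi'
  have kj := keyInt n j hn hj'
  linear_combination ((2 * n).choose (n + i) : ℤ) * kj - ((2 * n).choose (n + j) : ℤ) * ki
end
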